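/- arXiv:1801.05855 — 2 statements merged into one kernel-verified Lean document; each statement's English description precedes it below -/
import Mathlib

section
/- Let G be a finite connected simple undirected graph in which every vertex has degree at least 2 and at least one vertex has degree at least 3. Define a directed graph H whose vertex set is the set of darts of G, with an arc from dart (u,v) to dart (x,y) if and only if v = x and u ≠ y (non-backtracking continuation). Then H is strongly connected: for any two darts e and e' of G, there is a directed path in H from e to e'. -/
/-- The non-backtracking step relation on darts of a simple graph: there is an arc from
dart `e` to dart `f` iff `f` continues `e` without backtracking. -/
def NBStep {V : Type*} (G : SimpleGraph V) (e f : G.Dart) : Prop :=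
  e.snd = f.fst ∧ e.fst ≠ f.snd

section Aux

variable {V : Type*} [Fintype V] [DecidableEq V] (G : SimpleGraph V) [DecidableRel G.Adj]

/-- If every vertex has degree at least two, each vertex has a neighbor avoiding any
prescribed vertex. -/
lemma nb_exists_adj_ne (hdeg2 : ∀ v : V, 2 ≤ G.degree v) (v c : V) :
    ∃ x : V, G.Adj v x ∧ x ≠ c := by
  have h1 : 1 < (G.neighborFinset v).card := by
    have := hdeg2 v
    rw [SimpleGraph.degree] at this
    omega
  obtain ⟨b, hb, hbc⟩ := Finset.exists_mem_ne h1 c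
  exact ⟨b, by rwa [SimpleGraph.mem_neighborFinset] at hb, hbc⟩

/-- In a connected graph, every vertex `v ≠ w` has a neighbor strictly closer to `w`. -/
lemma nb_exists_closer (hconn : G.Connected) {v w : V} (hvw : v ≠ w) :
    ∃ y : V, G.Adj v y ∧ G.dist y w + 1 = G.dist v w := by
  obtain ⟨p, hp⟩ := hconn.exists_walk_length_eq_dist v w
  cases p with
  | nil => exact absurd rfl hvw
  | cons h q =>
    rename_i y
    refine ⟨y, h, ?_⟩
    have h1 : G.dist y w ≤ q.length := SimpleGraph.dist_le q
    obtain ⟨q', hq'⟩ := hconn.exists_walk_length_eq_dist y w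
    have h2 : G.dist v w ≤ (SimpleGraph.Walk.cons h q').length := SimpleGraph.dist_le _
    simp only [SimpleGraph.Walk.length_cons] at hp h2
    omega

/-- The key "return" lemma: any nonempty set of darts closed under non-backtracking steps
contains a dart pointing into any prescribed vertex `w`. -/
lemma nb_return (hconn : G.Connected) (hdeg2 : ∀ v : V, 2 ≤ G.degree v)
    (S : G.Dart → Prop) (hcl : ∀ f g : G.Dart, S f → NBStep G f g → S g)
    (hne : ∃ f, S f) (w : V) : ∃ f : G.Dart, S f ∧ f.snd = w := by
  classical
  by_contra hcon
  push_neg at hcon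
  obtain ⟨f₀, hf₀⟩ := hne
  set lev : G.Dart → ℕ := fun f => G.dist f.snd w with hlevdef
  set L : Finset ℕ := Finset.image lev (Finset.univ.filter S) with hLdef
  have hmemL : ∀ f : G.Dart, S f → lev f ∈ L := by
    intro f hf
    exact Finset.mem_image.mpr ⟨f, Finset.mem_filter.mpr ⟨Finset.mem_univ _, hf⟩, rfl⟩
  have hLne : L.Nonempty := ⟨lev f₀, hmemL f₀ hf₀⟩
  set m : ℕ := L.min' hLne with hmdef
  -- every dart in S at level m + j has its tail at level m + j - 1
  have claim : ∀ j : ℕ, ∀ f : G.Dart, S f → lev f = m + j → G.dist f.fst w + 1 = m + j := by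
    intro j
    induction j using Nat.strong_induction_on with
    | _ j ih =>
      intro f hf hlev
      obtain ⟨y, hadj, hy⟩ := nb_exists_closer G hconn (hcon f hf)
      by_cases hyf : y = f.fst
      · rw [hyf] at hy; rw [← hlev]; exact hy
      · set g : G.Dart := ⟨(f.snd, y), hadj⟩ with hgdef
        have hgS : S g := hcl f g hf ⟨rfl, fun hcc => hyf hcc.symm⟩
        have hgm : m ≤ lev g := Finset.min'_le L _ (hmemL g hgS)
        have hlevg : lev g + 1 = m + j := by
          have hfsnd : G.dist f.snd w = m + j := hlev
          show G.dist y w + 1 = m + j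
          omega
        have hj1 : 1 ≤ j := by omega
        have hgj : lev g = m + (j - 1) := by omega
        have := ih (j - 1) (by omega) g hgS hgj
        -- g.fst = f.snd, so dist f.snd w = m + (j-1) - 1, but lev f = m + j
        have hfs : G.dist f.snd w + 1 = m + (j - 1) := this
        have : G.dist f.snd w = m + j := hlev
        omega
  -- contradiction with the maximal level
  set M : ℕ := L.max' hLne with hMdef
  have hMmem : M ∈ L := L.max'_mem hLne
  obtain ⟨fM, hfMmem, hfM⟩ := Finset.mem_image.mp hMmem
  have hfMS : S fM := (Finset.mem_filter.mp hfMmem).2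
  obtain ⟨x, hadj, hx⟩ := nb_exists_adj_ne G hdeg2 fM.snd fM.fst
  set g : G.Dart := ⟨(fM.snd, x), hadj⟩ with hgdef
  have hgS : S g := hcl fM g hfMS ⟨rfl, fun hcc => hx hcc.symm⟩
  have hgle : lev g ≤ M := Finset.le_max' L _ (hmemL g hgS)
  have hgm : m ≤ lev g := Finset.min'_le L _ (hmemL g hgS)
  have := claim (lev g - m) g hgS (by omega)
  -- g.fst = fM.snd, so dist fM.snd w + 1 = lev g, i.e. M + 1 = lev g ≤ M
  have hMeq : G.dist fM.snd w = M := hfM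
  have : G.dist fM.snd w + 1 = m + (lev g - m) := this
  omega

end Aux

/-- Proposition 3.1: if `G` is connected, every vertex has degree at least 2, and some vertex
has degree at least 3, then the oriented line graph (the non-backtracking dart graph) is
strongly connected. -/
theorem oriented_line_graph_strongly_connected
    {V : Type*} [Fintype V] [DecidableEq V] (G : SimpleGraph V) [DecidableRel G.Adj]
    (hconn : G.Connected)
    (hdeg2 : ∀ v : V, 2 ≤ G.degree v)
    (hdeg3 : ∃ v : V, 3 ≤ G.degree v) :
    ∀ e e' : G.Dart, Relation.ReflTransGen (NBStep G) e e' := by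
  intro e e'
  by_contra hne'
  classical
  set S : G.Dart → Prop := fun f => Relation.ReflTransGen (NBStep G) e f with hSdef
  have hScl : ∀ f g : G.Dart, S f → NBStep G f g → S g := fun f g hf h => hf.tail h
  have hSne : S e := Relation.ReflTransGen.refl
  -- if a dart is not reachable, its reversal is reachable
  have hd : ∀ f : G.Dart, ¬ S f → S f.symm := by
    intro f hf
    obtain ⟨g, hgS, hgsnd⟩ := nb_return G hconn hdeg2 S hScl ⟨e, hSne⟩ f.fst
    by_cases hc : g.fst = f.snd
    · have hgf : g = f.symm := SimpleGraph.Dart.ext _ _ (Prod.ext hc hgsnd)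
      rwa [hgf] at hgS
    · exact absurd (hScl g f hgS ⟨hgsnd, hc⟩) hf
  -- every vertex has a non-reachable dart pointing out of it
  have hout : ∀ v : V, ∃ f : G.Dart, ¬ S f ∧ f.fst = v := by
    intro v
    have hcl' : ∀ f g : G.Dart, ¬ S f.symm → NBStep G f g → ¬ S g.symm := by
      intro f g hf hstep hgS
      obtain ⟨h1, h2⟩ := hstep
      refine hf (hScl g.symm f.symm hgS ?_)
      exact ⟨h1.symm, fun hcc => h2 hcc.symm⟩
    have hne'' : ∃ f : G.Dart, ¬ S f.symm := ⟨e'.symm, by simpa using hne'⟩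
    obtain ⟨g, hg, hgsnd⟩ := nb_return G hconn hdeg2 (fun f => ¬ S f.symm) hcl' hne'' v
    exact ⟨g.symm, hg, hgsnd⟩
  -- the head map is injective on non-reachable darts
  have hDinj : ∀ f f' : G.Dart, ¬ S f → ¬ S f' → f.fst = f'.fst → f = f' := by
    intro f f' hf hf' hfst
    by_cases hsnd : f.snd = f'.snd
    · exact SimpleGraph.Dart.ext _ _ (Prod.ext hfst hsnd)
    · exfalso
      have hstep : NBStep G f.symm f' := ⟨hfst, hsnd⟩
      exact hf' (hScl f.symm f' (hd f hf) hstep)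
  -- the tail map is injective on reachable darts
  have hSinj : ∀ g g' : G.Dart, S g → S g' → g.snd = g'.snd → g = g' := by
    intro g g' hg hg' hsnd
    obtain ⟨f, hfD, hffst⟩ := hout g.snd
    have h1 : g.fst = f.snd := by
      by_contra hc
      exact hfD (hScl g f hg ⟨hffst.symm, hc⟩)
    have h2 : g'.fst = f.snd := by
      by_contra hc
      exact hfD (hScl g' f hg' ⟨(hffst.trans hsnd).symm, hc⟩)
    exact SimpleGraph.Dart.ext _ _ (Prod.ext (h1.trans h2.symm) hsnd)
  -- counting
  set Sf : Finset G.Dart := Finset.univ.filter S with hSfdef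
  have hcardS : Sf.card ≤ Fintype.card V := by
    rw [← Finset.card_univ (α := V)]
    refine Finset.card_le_card_of_injOn (fun d : G.Dart => d.snd)
      (fun _ _ => Finset.mem_univ _) ?_
    intro a ha b hb hab
    exact hSinj a b (Finset.mem_filter.mp ha).2 (Finset.mem_filter.mp hb).2 hab
  have hcardD : Sfᶜ.card ≤ Fintype.card V := by
    rw [← Finset.card_univ (α := V)]
    refine Finset.card_le_card_of_injOn (fun d : G.Dart => d.fst)
      (fun _ _ => Finset.mem_univ _) ?_
    intro a ha b hb hab
    have ha' : ¬ S a := by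
      have := Finset.mem_compl.mp ha
      simpa [hSfdef] using this
    have hb' : ¬ S b := by
      have := Finset.mem_compl.mp hb
      simpa [hSfdef] using this
    exact hDinj a b ha' hb' hab
  have htot : Sf.card + Sfᶜ.card = Fintype.card G.Dart := Finset.card_add_card_compl Sf
  have hsum : Fintype.card G.Dart = ∑ v : V, G.degree v := G.dart_card_eq_sum_degrees
  have hlt : 2 * Fintype.card V < ∑ v : V, G.degree v := by
    obtain ⟨w, hw⟩ := hdeg3
    calc 2 * Fintype.card V = ∑ _v : V, 2 := by
            rw [Finset.sum_const, Finset.card_univ, smul_eq_mul, mul_comm]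
      _ < ∑ v : V, G.degree v :=
            Finset.sum_lt_sum (fun i _ => hdeg2 i) ⟨w, Finset.mem_univ w, by omega⟩
  omega
end

section
/- For every function g from the darts of G to ℝ and every vertex u of G, the out-sum at u of the vector gᵀP̄ satisfies the exact identity: Σ_{v ∈ N(u)} (gᵀP̄)(u,v) = (1/2) · g^in(u) + Σ_{v ∈ N(u)} (g^out(v) − g(v,u)) / (2(deg(v) − 1)). -/
open Finset Matrix

/-- The non-backtracking transition matrix of a simple graph, indexed by darts:
`P[(u→v),(x→y)] = 1/(deg v − 1)` if `v = x` and `u ≠ y`, and `0` otherwise. -/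
noncomputable def nbMatrix {V : Type*} [Fintype V] [DecidableEq V] (G : SimpleGraph V)
    [DecidableRel G.Adj] : Matrix G.Dart G.Dart ℝ :=
  fun e f => if e.snd = f.fst ∧ e.fst ≠ f.snd then 1 / ((G.degree e.snd : ℝ) - 1) else 0

/-- The symmetrized non-backtracking matrix `P̄ = (P + Pᵀ)/2`. -/
noncomputable def nbBar {V : Type*} [Fintype V] [DecidableEq V] (G : SimpleGraph V)
    [DecidableRel G.Adj] : Matrix G.Dart G.Dart ℝ :=
  (2 : ℝ)⁻¹ • (nbMatrix G + (nbMatrix G)ᵀ)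

/-- Extend a function on darts of `G` to a function on ordered pairs of vertices, taking the
value `0` on non-adjacent pairs. -/
noncomputable def dartFun {V : Type*} (G : SimpleGraph V) [DecidableRel G.Adj]
    (g : G.Dart → ℝ) (a b : V) : ℝ :=
  if h : G.Adj a b then g ⟨(a, b), h⟩ else 0

/-!
A non-backtracking step from `e` may go to any dart leaving `e.snd` except the reversal of `e`, so
`(gᵀP)(u,v) = (g^in(u) - g(v,u)) / (deg u - 1)`, and since `P[e,f] = P[f̄,ē]` for reversed
darts, `(Pg)(u,v) = (g^out(v) - g(v,u)) / (deg v - 1)`. Averaging the two gives `gᵀP̄`. Summed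
over `v ∈ N(u)`, the first term counts every dart into `u` exactly `deg u - 1` times, which
cancels its normalisation.
-/

namespace SimpleGraph

variable {V : Type*} (G : SimpleGraph V) [DecidableRel G.Adj]

theorem dartFun_of_adj (g : G.Dart → ℝ) {a b : V} (h : G.Adj a b) :
    dartFun G g a b = g ⟨(a, b), h⟩ :=
  dif_pos h

theorem dartFun_comp_symm (g : G.Dart → ℝ) (a b : V) :
    dartFun G (g ∘ Dart.symm) a b = dartFun G g b a := by
  by_cases h : G.Adj a b
  · rw [dartFun_of_adj G _ h, dartFun_of_adj G _ h.symm]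
    rfl
  · rw [dartFun, dif_neg h, dartFun, dif_neg (mt Adj.symm h)]

variable [Fintype V] [DecidableEq V]

theorem sum_dart_fst_eq_sum_neighborFinset (g : G.Dart → ℝ) (v : V) :
    ∑ d with d.fst = v, g d = ∑ w ∈ G.neighborFinset v, dartFun G g v w := by
  rw [dart_fst_fiber, sum_image fun _ _ _ _ h => G.dartOfNeighborSet_injective v h,
    sum_subtype _ fun w => G.mem_neighborFinset v w]
  exact Fintype.sum_congr _ _ fun w => (dartFun_of_adj G g w.2).symm

theorem sum_dart_snd_eq_sum_neighborFinset (g : G.Dart → ℝ) (v : V) :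
    ∑ d with d.snd = v, g d = ∑ w ∈ G.neighborFinset v, dartFun G g w v := by
  rw [← funext (dartFun_comp_symm G g v), ← sum_dart_fst_eq_sum_neighborFinset]
  exact sum_nbij' Dart.symm Dart.symm (by simp) (by simp) (by simp [Dart.symm_symm])
    (by simp [Dart.symm_symm]) (by simp [Dart.symm_symm])

theorem nbMatrix_apply_eq_sub (e f : G.Dart) :
    nbMatrix G e f = ((if e.snd = f.fst then 1 else 0) - if e = f.symm then 1 else 0) /
      ((G.degree f.fst : ℝ) - 1) := by
  by_cases hsnd : e.snd = f.fst
  · have hsymm : e = f.symm ↔ e.fst = f.snd :=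
      ⟨fun h => h ▸ rfl, fun h => Dart.ext _ _ (Prod.ext h hsnd)⟩
    have hdeg : G.degree e.snd = G.degree f.fst := congrArg (fun v => G.degree v) hsnd
    by_cases hfst : e.fst = f.snd <;> simp [nbMatrix, hsnd, hsymm, hfst, hdeg]
  · have hsymm : e ≠ f.symm := fun h => hsnd (h ▸ rfl)
    simp [nbMatrix, hsnd, hsymm]

theorem nbMatrix_symm_symm (e f : G.Dart) : nbMatrix G f.symm e.symm = nbMatrix G e f := by
  have hcond :
      f.symm.snd = e.symm.fst ∧ f.symm.fst ≠ e.symm.snd ↔ e.snd = f.fst ∧ e.fst ≠ f.snd :=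
    and_congr eq_comm ne_comm
  simp only [nbMatrix, hcond]
  split_ifs with h
  · exact congrArg (fun v => 1 / ((G.degree v : ℝ) - 1)) h.1.symm
  · rfl

theorem vecMul_nbMatrix_apply (g : G.Dart → ℝ) (f : G.Dart) :
    (g ᵥ* nbMatrix G) f =
      (∑ a ∈ G.neighborFinset f.fst, dartFun G g a f.fst - g f.symm) /
        ((G.degree f.fst : ℝ) - 1) := by
  simp only [vecMul, dotProduct, nbMatrix_apply_eq_sub, mul_div_assoc', mul_sub, mul_ite, mul_one,
    mul_zero, ← sum_div, sum_sub_distrib, sum_ite_eq', mem_univ, if_true, ← sum_filter,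
    sum_dart_snd_eq_sum_neighborFinset]

theorem mulVec_nbMatrix_apply (g : G.Dart → ℝ) (f : G.Dart) :
    (nbMatrix G *ᵥ g) f =
      (∑ b ∈ G.neighborFinset f.snd, dartFun G g f.snd b - g f.symm) /
        ((G.degree f.snd : ℝ) - 1) := by
  have hrev : (nbMatrix G *ᵥ g) f = ((g ∘ Dart.symm) ᵥ* nbMatrix G) f.symm :=
    Fintype.sum_bijective _ Dart.symm_involutive.bijective _ _ fun e => by
      simp [nbMatrix_symm_symm, Dart.symm_symm, mul_comm]
  rw [hrev, vecMul_nbMatrix_apply]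
  simp only [dartFun_comp_symm]
  rfl

theorem vecMul_nbBar (g : G.Dart → ℝ) :
    g ᵥ* nbBar G = (2 : ℝ)⁻¹ • (g ᵥ* nbMatrix G + nbMatrix G *ᵥ g) := by
  rw [nbBar, vecMul_smul, vecMul_add, vecMul_transpose]

theorem dartFun_vecMul_nbBar (g : G.Dart → ℝ) {u v : V} (h : G.Adj u v) :
    dartFun G (g ᵥ* nbBar G) u v =
      2⁻¹ * ((∑ a ∈ G.neighborFinset u, dartFun G g a u - dartFun G g v u) /
          ((G.degree u : ℝ) - 1) +
        (∑ b ∈ G.neighborFinset v, dartFun G g v b - dartFun G g v u) /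
          ((G.degree v : ℝ) - 1)) := by
  rw [dartFun_of_adj G _ h, vecMul_nbBar, Pi.smul_apply, Pi.add_apply, vecMul_nbMatrix_apply,
    mulVec_nbMatrix_apply, dartFun_of_adj G g h.symm]
  rfl

end SimpleGraph

/-- The exact identity in the proof of Lemma 3.1 (before the mean-field approximation):
the out-sum at `u` of `gᵀP̄` equals
`(1/2)·g^in(u) + Σ_{v ∈ N(u)} (g^out(v) − g(v,u))/(2(deg v − 1))`. -/
theorem out_sum_vecMul_nbBar
    {V : Type*} [Fintype V] [DecidableEq V] (G : SimpleGraph V) [DecidableRel G.Adj]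
    (hdeg : ∀ v : V, 2 ≤ G.degree v)
    (g : G.Dart → ℝ) (u : V) :
    ∑ v ∈ G.neighborFinset u,
        dartFun G (fun e' : G.Dart => ∑ e : G.Dart, g e * nbBar G e e') u v =
      (1 / 2) * (∑ v ∈ G.neighborFinset u, dartFun G g v u) +
        ∑ v ∈ G.neighborFinset u,
          ((∑ w ∈ G.neighborFinset v, dartFun G g v w) - dartFun G g v u) /
            (2 * ((G.degree v : ℝ) - 1)) := by
  have hu : (G.degree u : ℝ) - 1 ≠ 0 := by
    have : (2 : ℝ) ≤ G.degree u := by exact_mod_cast hdeg u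
    linarith
  have in_count :
      ∑ v ∈ G.neighborFinset u, (∑ a ∈ G.neighborFinset u, dartFun G g a u - dartFun G g v u) =
        ((G.degree u : ℝ) - 1) * ∑ a ∈ G.neighborFinset u, dartFun G g a u := by
    rw [sum_sub_distrib, sum_const, G.card_neighborFinset_eq_degree, nsmul_eq_mul]
    ring
  change ∑ v ∈ G.neighborFinset u, dartFun G (g ᵥ* nbBar G) u v = _
  rw [sum_congr rfl fun v hv => G.dartFun_vecMul_nbBar g ((G.mem_neighborFinset u v).1 hv),
    ← mul_sum, sum_add_distrib, ← sum_div, in_count, mul_div_cancel_left₀ _ hu, mul_add,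
    one_div]
  congr 1
  rw [mul_sum]
  exact sum_congr rfl fun v _ => by rw [inv_mul_eq_div, div_right_comm, div_div]
end
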